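/- arXiv:2004.07363 — 2 statements merged into one kernel-verified Lean document; each statement's English description precedes it below -/
import Mathlib

section
/- Skorohod representation on ℝ: if probability measures P_n on ℝ converge weakly to a probability measure P, then on the probability space ([0,1], Borel, Lebesgue) there exist random variables Y_n and Y such that Y_n has law P_n, Y has law P, and Y_n → Y almost surely. One may take Y_n = F_n⁻¹ ∘ U and Y = F⁻¹ ∘ U where U is the identity map and F_n, F are the cdfs. -/
/-!
With `F` the cdf of `μ`, the quantile `F⁻¹(u) = inf {x | u ≤ F x}` satisfies `F⁻¹(u) ≤ x ↔ u ≤ F x`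
for `0 < u < 1`, so under Lebesgue measure on `[0, 1]` the event `F⁻¹ ≤ x` has probability `F x`.
Weak convergence gives `F_n x → F x` at every non-atom `x` of the limit, and non-atoms are dense.
Squeezing `F⁻¹(u)` between non-atoms then gives `F_n⁻¹(u) → F⁻¹(u)` at every `u ∈ (0, 1)` where
the monotone function `F⁻¹` is continuous, i.e. off a countable set.
-/

open MeasureTheory Filter Topology Set

namespace ProbabilityTheory

noncomputable def quantile (μ : Measure ℝ) (u : ℝ) : ℝ := sInf {x : ℝ | u ≤ cdf μ x}

variable {μ : Measure ℝ} {u x : ℝ}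

lemma quantile_eq_sInf_measure_Iic [IsProbabilityMeasure μ] :
    quantile μ = fun u => sInf {x : ℝ | u ≤ (μ (Iic x)).toReal} := by
  ext u
  simp only [quantile, cdf_eq_real, measureReal_def]

lemma nonempty_setOf_le_cdf (hu : u < 1) : {x | u ≤ cdf μ x}.Nonempty :=
  ((tendsto_cdf_atTop μ).eventually (eventually_ge_nhds hu)).exists

lemma bddBelow_setOf_le_cdf (hu : 0 < u) : BddBelow {x | u ≤ cdf μ x} := by
  obtain ⟨x₀, hx₀⟩ := ((tendsto_cdf_atBot μ).eventually (eventually_lt_nhds hu)).exists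
  exact ⟨x₀, fun y hy => le_of_not_gt fun hyx => (hy.trans (monotone_cdf μ hyx.le)).not_gt hx₀⟩

lemma le_cdf_quantile (hu₁ : u < 1) : u ≤ cdf μ (quantile μ u) := by
  have hright : ∀ y, quantile μ u < y → u ≤ cdf μ y := fun y hy => by
    obtain ⟨z, hz, hzy⟩ := exists_lt_of_csInf_lt (nonempty_setOf_le_cdf hu₁) hy
    exact hz.trans (monotone_cdf μ hzy.le)
  exact ge_of_tendsto (((cdf μ).right_continuous _).mono Ioi_subset_Ici_self).tendsto
    (eventually_mem_nhdsWithin.mono hright)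

lemma quantile_le_iff (hu₀ : 0 < u) (hu₁ : u < 1) : quantile μ u ≤ x ↔ u ≤ cdf μ x :=
  ⟨fun h => (le_cdf_quantile hu₁).trans (monotone_cdf μ h),
    fun h => csInf_le (bddBelow_setOf_le_cdf hu₀) h⟩

lemma monotoneOn_quantile : MonotoneOn (quantile μ) (Ioo 0 1) :=
  fun _ hu _ hv huv => (quantile_le_iff hu.1 hu.2).2 (huv.trans (le_cdf_quantile hv.2))

lemma quantile_of_notMem_Icc (hu : u ∉ Icc 0 1) : quantile μ u = 0 := by
  rcases not_and_or.1 hu with hu | hu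
  · have : {x | u ≤ cdf μ x} = univ :=
      eq_univ_of_forall fun x => (not_le.1 hu).le.trans (cdf_nonneg μ x)
    rw [quantile, this, Real.sInf_of_not_bddBelow not_bddBelow_univ]
  · have : {x | u ≤ cdf μ x} = ∅ :=
      eq_empty_of_forall_notMem fun x hx => hu ((cdf_le_one μ x).trans' hx)
    rw [quantile, this, Real.sInf_empty]

lemma countable_not_continuousAt_quantile : {u | ¬ContinuousAt (quantile μ) u}.Countable := by
  refine ((monotoneOn_quantile (μ := μ)).countable_not_continuousWithinAt.union
    ((countable_singleton (1 : ℝ)).insert 0)).mono fun u hu => ?_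
  by_cases hIoo : u ∈ Ioo 0 1
  · exact Or.inl ⟨hIoo, by rwa [continuousWithinAt_iff_continuousAt (isOpen_Ioo.mem_nhds hIoo)]⟩
  by_cases hIcc : u ∈ Icc 0 1
  · exact Or.inr ((Icc_sdiff_Ioo_same (zero_le_one' ℝ)).subset ⟨hIcc, hIoo⟩)
  have hzero : quantile μ =ᶠ[𝓝 u] fun _ => 0 :=
    eventuallyEq_of_mem (isClosed_Icc.isOpen_compl.mem_nhds hIcc) fun _ hv =>
      quantile_of_notMem_Icc hv
  exact absurd (continuousAt_const.congr hzero.symm) hu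

lemma measurable_quantile : Measurable (quantile μ) :=
  measurable_of_countable_not_continuousAt countable_not_continuousAt_quantile

lemma volume_Iic_inter_Ioo_zero_one {c : ℝ} (hc : c ≤ 1) :
    volume (Iic c ∩ Ioo 0 1) = ENNReal.ofReal c := by
  refine le_antisymm ?_ ?_
  · calc volume (Iic c ∩ Ioo 0 1) ≤ volume (Ioc 0 c) :=
          measure_mono fun u hu => ⟨hu.2.1, hu.1⟩
      _ = ENNReal.ofReal c := by rw [Real.volume_Ioc, sub_zero]
  · calc ENNReal.ofReal c = volume (Ioo 0 c) := by rw [Real.volume_Ioo, sub_zero]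
      _ ≤ volume (Iic c ∩ Ioo 0 1) :=
          measure_mono fun u hu => ⟨hu.2.le, hu.1, hu.2.trans_le hc⟩

lemma map_quantile_volume_Icc [IsProbabilityMeasure μ] :
    (volume.restrict (Icc (0 : ℝ) 1)).map (quantile μ) = μ := by
  refine Measure.ext_of_Iic _ _ fun x => ?_
  have hpre : quantile μ ⁻¹' Iic x ∩ Ioo 0 1 = Iic (cdf μ x) ∩ Ioo 0 1 := by
    ext u
    exact and_congr_left fun hu => quantile_le_iff hu.1 hu.2
  rw [Measure.map_apply measurable_quantile measurableSet_Iic,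
    ← Measure.restrict_congr_set Ioo_ae_eq_Icc,
    Measure.restrict_apply (measurable_quantile measurableSet_Iic), hpre,
    volume_Iic_inter_Ioo_zero_one (cdf_le_one μ x), ofReal_cdf]

lemma tendsto_cdf_of_tendsto {ι : Type*} {L : Filter ι} {μs : ι → ProbabilityMeasure ℝ}
    {ν : ProbabilityMeasure ℝ} (h : Tendsto μs L (𝓝 ν)) (hx : (ν : Measure ℝ) {x} = 0) :
    Tendsto (fun i => cdf (μs i) x) L (𝓝 (cdf ν x)) := by
  have hIic := ProbabilityMeasure.tendsto_measure_of_null_frontier_of_tendsto' h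
    (E := Iic x) (by rwa [frontier_Iic])
  simp only [cdf_eq_real, measureReal_def]
  exact (ENNReal.tendsto_toReal (measure_ne_top _ _)).comp hIic

lemma exists_measure_singleton_eq_zero_mem_Ioo (μ : Measure ℝ) [SFinite μ] {a b : ℝ}
    (hab : a < b) : ∃ x ∈ Ioo a b, μ {x} = 0 := by
  have hatoms : {x : ℝ | 0 < μ {x}}.Countable := by
    simpa [id] using Measure.countable_meas_level_set_pos measurable_id
  obtain ⟨x, hx, hxab⟩ := (hatoms.dense_compl ℝ).exists_between hab
  exact ⟨x, hxab, le_zero_iff.1 (not_lt.1 hx)⟩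

lemma tendsto_quantile_of_tendsto_cdf {ι : Type*} {L : Filter ι} {μs : ι → Measure ℝ}
    [SFinite μ] (hcdf : ∀ x, μ {x} = 0 → Tendsto (fun i => cdf (μs i) x) L (𝓝 (cdf μ x)))
    (hu : u ∈ Ioo 0 1) (hcont : ContinuousAt (quantile μ) u) :
    Tendsto (fun i => quantile (μs i) u) L (𝓝 (quantile μ u)) := by
  refine tendsto_order.2 ⟨fun b hb => ?_, fun b hb => ?_⟩
  · obtain ⟨x, hx, hxatom⟩ := exists_measure_singleton_eq_zero_mem_Ioo μ hb
    have hcdf_lt : cdf μ x < u := not_le.1 fun h => hx.2.not_ge ((quantile_le_iff hu.1 hu.2).2 h)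
    filter_upwards [(hcdf x hxatom).eventually_lt_const hcdf_lt] with i hi
    exact hx.1.trans (not_le.1 fun h => hi.not_ge ((quantile_le_iff hu.1 hu.2).1 h))
  · -- passing to some `v > u` with `quantile μ v < b` makes the cdf inequality below strict
    obtain ⟨v, hvb, hv⟩ := (((hcont.eventually (gt_mem_nhds hb)).filter_mono
      nhdsWithin_le_nhds).and (Ioo_mem_nhdsGT hu.2)).exists
    obtain ⟨x, hx, hxatom⟩ := exists_measure_singleton_eq_zero_mem_Ioo μ hvb
    have hlt_cdf : u < cdf μ x :=
      hv.1.trans_le ((quantile_le_iff (hu.1.trans hv.1) hv.2).1 hx.1.le)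
    filter_upwards [(hcdf x hxatom).eventually_const_lt hlt_cdf] with i hi
    exact ((quantile_le_iff hu.1 hu.2).2 hi.le).trans_lt hx.2

end ProbabilityTheory

open ProbabilityTheory

/-- Skorohod representation on ℝ: if probability measures `P n` converge weakly to `P`,
then on `([0,1], Borel, Lebesgue)` there are random variables `Y n` with law `P n` and `Y∞`
with law `P` such that `Y n → Y∞` almost surely; one may take the quantile transforms. -/
theorem skorohod_representation_real
    (P : ℕ → Measure ℝ) (Q : Measure ℝ)
    [∀ n, IsProbabilityMeasure (P n)] [IsProbabilityMeasure Q]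
    (hweak : ∀ f : BoundedContinuousFunction ℝ ℝ,
      Tendsto (fun n => ∫ x, f x ∂(P n)) atTop (𝓝 (∫ x, f x ∂Q))) :
    ∃ (Y : ℕ → ℝ → ℝ) (Z : ℝ → ℝ),
      (∀ n, Measurable (Y n)) ∧ Measurable Z ∧
      (∀ n, Measure.map (Y n) (volume.restrict (Set.Icc (0:ℝ) 1)) = P n) ∧
      Measure.map Z (volume.restrict (Set.Icc (0:ℝ) 1)) = Q ∧
      (∀ n, Y n = fun u => sInf {x : ℝ | u ≤ ((P n) (Set.Iic x)).toReal}) ∧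
      (Z = fun u => sInf {x : ℝ | u ≤ (Q (Set.Iic x)).toReal}) ∧
      ∀ᵐ u ∂(volume.restrict (Set.Icc (0:ℝ) 1)),
        Tendsto (fun n => Y n u) atTop (𝓝 (Z u)) := by
  have hcdf : ∀ x, Q {x} = 0 → Tendsto (fun n => cdf (P n) x) atTop (𝓝 (cdf Q x)) :=
    fun x => tendsto_cdf_of_tendsto (μs := fun n => ⟨P n, inferInstance⟩) (ν := ⟨Q, inferInstance⟩)
      (ProbabilityMeasure.tendsto_iff_forall_integral_tendsto.2 hweak)
  have hIoo : ∀ᵐ u ∂volume.restrict (Icc (0 : ℝ) 1), u ∈ Ioo 0 1 := by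
    rw [← Measure.restrict_congr_set Ioo_ae_eq_Icc]
    exact ae_restrict_mem measurableSet_Ioo
  have hcont : ∀ᵐ u ∂volume.restrict (Icc (0 : ℝ) 1), ContinuousAt (quantile Q) u :=
    ae_restrict_of_ae ((countable_not_continuousAt_quantile.ae_notMem volume).mono
      fun _ hu => not_not.1 hu)
  refine ⟨fun n => quantile (P n), quantile Q, fun n => measurable_quantile, measurable_quantile,
    fun n => map_quantile_volume_Icc, map_quantile_volume_Icc,
    fun n => quantile_eq_sInf_measure_Iic, quantile_eq_sInf_measure_Iic, ?_⟩
  filter_upwards [hIoo, hcont] with u hu hcu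
  exact tendsto_quantile_of_tendsto_cdf hcdf hu hcu
end

section
/- Let P_α and P be probability measures on a measurable space S, let (C_p)_{p∈I} be a finite measurable partition of S with P_α(C_p) > 0 and P(C_p) > 0 for p ∈ I, and let 0 < β* < 1. Define H_α(A) = (1/(1−β*)) P_α(A) − (β*/(1−β*)) Σ_{p∈I} P_α(A | C_p) P(C_p). If β* ≤ min_{p∈I} P_α(C_p)/P(C_p), then H_α is a probability measure, and P_α(A) = (1−β*) H_α(A) + β* Σ_{p∈I} P(C_p) P_α(A | C_p) for all measurable A. -/
/-!
On each cell `C p` the measure `H` is `Pα` rescaled by the constant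
`(1 - β * Q (C p) / Pα (C p)) / (1 - β)`, which is nonnegative exactly when
`β ≤ Pα (C p) / Q (C p)`. So `H` is a genuine measure; the defining formula is arithmetic
cell by cell, and its total mass is `(1 - β * ∑ p, Q (C p)) / (1 - β) = 1`.
-/

open MeasureTheory Finset
open scoped NNReal

namespace MeasureTheory

variable {S I : Type*} [MeasurableSpace S] [Fintype I] {C : I → Set S}

theorem measureReal_eq_sum_inter_of_partition (μ : Measure S) [IsFiniteMeasure μ]
    (hmeas : ∀ p, MeasurableSet (C p)) (hdisj : Pairwise (Function.onFun Disjoint C))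
    (hcover : ⋃ p, C p = Set.univ) {A : Set S} (hA : MeasurableSet A) :
    μ.real A = ∑ p, μ.real (A ∩ C p) := by
  have hdisjA : Pairwise (Function.onFun Disjoint fun p ↦ A ∩ C p) := fun i j hij ↦
    (hdisj hij).mono Set.inter_subset_right Set.inter_subset_right
  rw [← measureReal_iUnion_fintype hdisjA (fun p ↦ hA.inter (hmeas p)), ← Set.inter_iUnion,
    hcover, Set.inter_univ]

theorem measureReal_sum_smul_restrict (μ : Measure S) [IsFiniteMeasure μ]
    (hmeas : ∀ p, MeasurableSet (C p)) (w : I → ℝ≥0) (A : Set S) :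
    (∑ p, w p • μ.restrict (C p)).real A = ∑ p, w p * μ.real (A ∩ C p) := by
  simp only [measureReal_def, Measure.coe_finsetSum, Finset.sum_apply]
  rw [ENNReal.toReal_sum (fun p _ ↦ by finiteness)]
  simp [← measureReal_def, hmeas]

end MeasureTheory

theorem wichura_decomposition_general
    {S : Type*} [MeasurableSpace S] {I : Type*} [Fintype I]
    (Pα Q : Measure S) [IsProbabilityMeasure Pα] [IsProbabilityMeasure Q]
    (C : I → Set S) (hmeas : ∀ p, MeasurableSet (C p))
    (hdisj : Pairwise (Function.onFun Disjoint C)) (hcover : (⋃ p, C p) = Set.univ)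
    (hposα : ∀ p, 0 < Pα (C p)) (hposQ : ∀ p, 0 < Q (C p))
    (β : ℝ) (hβ1 : β < 1)
    (hβle : ∀ p, β ≤ (Pα (C p)).toReal / (Q (C p)).toReal) :
    ∃ H : Measure S, IsProbabilityMeasure H ∧
      (∀ A : Set S, MeasurableSet A →
        (H A).toReal = (1 / (1 - β)) * (Pα A).toReal
          - (β / (1 - β)) * ∑ p : I,
              ((Pα (A ∩ C p)).toReal / (Pα (C p)).toReal) * (Q (C p)).toReal) ∧
      (∀ A : Set S, MeasurableSet A →
        (Pα A).toReal = (1 - β) * (H A).toReal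
          + β * ∑ p : I,
              (Q (C p)).toReal * ((Pα (A ∩ C p)).toReal / (Pα (C p)).toReal)) := by
  simp only [← measureReal_def] at hβle ⊢
  have hβ' : 1 - β ≠ 0 := by linarith
  have hPα_pos (p : I) : 0 < Pα.real (C p) := ENNReal.toReal_pos (hposα p).ne' (by finiteness)
  have hQ_pos (p : I) : 0 < Q.real (C p) := ENNReal.toReal_pos (hposQ p).ne' (by finiteness)
  let w (p : I) : ℝ := (1 - β * (Q.real (C p) / Pα.real (C p))) / (1 - β)
  have hw_nonneg (p : I) : 0 ≤ w p := by
    have : β * (Q.real (C p) / Pα.real (C p)) ≤ 1 := by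
      rw [← mul_div_assoc, div_le_one (hPα_pos p), ← le_div_iff₀ (hQ_pos p)]
      exact hβle p
    exact div_nonneg (by linarith) (by linarith)
  set H : Measure S := ∑ p, (w p).toNNReal • Pα.restrict (C p)
  have hH (A : Set S) (hA : MeasurableSet A) : H.real A = 1 / (1 - β) * Pα.real A
      - β / (1 - β) * ∑ p, Pα.real (A ∩ C p) / Pα.real (C p) * Q.real (C p) := by
    rw [measureReal_sum_smul_restrict Pα hmeas,
      measureReal_eq_sum_inter_of_partition Pα hmeas hdisj hcover hA,
      mul_sum, mul_sum, ← sum_sub_distrib]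
    refine sum_congr rfl fun p _ ↦ ?_
    have := (hPα_pos p).ne'
    rw [Real.coe_toNNReal _ (hw_nonneg p)]
    simp only [w]
    field_simp
  have hH_univ : H.real Set.univ = 1 := by
    have hQ_sum := measureReal_eq_sum_inter_of_partition Q hmeas hdisj hcover MeasurableSet.univ
    simp only [hH _ MeasurableSet.univ, Set.univ_inter, probReal_univ] at hQ_sum ⊢
    simp only [div_self (hPα_pos _).ne', one_mul, ← hQ_sum]
    field_simp
  refine ⟨H, ⟨?_⟩, hH, fun A hA ↦ ?_⟩
  · rw [← ofReal_measureReal, hH_univ, ENNReal.ofReal_one]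
  · simp only [hH A hA, mul_comm (Q.real _)]
    field_simp
    ring

/-- Wichura's decomposition: if `β* ≤ min_p P_α(C p)/P(C p)` for a finite measurable partition
`(C p)`, then `H_α(A) = (1/(1-β*)) P_α(A) - (β*/(1-β*)) Σ_p P_α(A|C p) P(C p)` defines a
probability measure and `P_α = (1-β*) H_α + β* Σ_p P(C p) P_α(·|C p)`. -/
theorem wichura_decomposition
    {S : Type*} [MeasurableSpace S] {I : Type*} [Fintype I]
    (Pα Q : Measure S) [IsProbabilityMeasure Pα] [IsProbabilityMeasure Q]
    (C : I → Set S) (hmeas : ∀ p, MeasurableSet (C p))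
    (hdisj : Pairwise (Function.onFun Disjoint C)) (hcover : (⋃ p, C p) = Set.univ)
    (hposα : ∀ p, 0 < Pα (C p)) (hposQ : ∀ p, 0 < Q (C p))
    (β : ℝ) (hβ0 : 0 < β) (hβ1 : β < 1)
    (hβle : ∀ p, β ≤ (Pα (C p)).toReal / (Q (C p)).toReal) :
    ∃ H : Measure S, IsProbabilityMeasure H ∧
      (∀ A : Set S, MeasurableSet A →
        (H A).toReal = (1 / (1 - β)) * (Pα A).toReal
          - (β / (1 - β)) * ∑ p : I,
              ((Pα (A ∩ C p)).toReal / (Pα (C p)).toReal) * (Q (C p)).toReal) ∧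
      (∀ A : Set S, MeasurableSet A →
        (Pα A).toReal = (1 - β) * (H A).toReal
          + β * ∑ p : I,
              (Q (C p)).toReal * ((Pα (A ∩ C p)).toReal / (Pα (C p)).toReal)) :=
  wichura_decomposition_general Pα Q C hmeas hdisj hcover hposα hposQ β hβ1 hβle
end
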